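/- arXiv:2205.15142 — 2 statements merged into one kernel-verified Lean document; each statement's English description precedes it below -/
import Mathlib

section
/- Let f : ℝ^d → ℝ be L-smooth and twice continuously differentiable, γ ≤ 1/(2L), and let g^T denote T-fold composition of g(x) = x - γ∇f(x). Then for any measurable Y ⊆ ℝ^d, ℒ((g^T)^{-1}(Y)) ≤ 2^{Td} · ℒ(Y). -/
open MeasureTheory Module
open scoped ENNReal NNReal

/-!
A gradient step `g = id - γ ∇f` with `γ L ≤ 1/2` moves points apart by at least half their
distance, so `g` is antilipschitz with constant `2`. On a finite-dimensional space Lebesgue measure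
is a multiple of the `d`-dimensional Hausdorff measure, whose preimages under a `K`-antilipschitz
map grow by at most `K ^ d`; iterating `T` times gives the factor `2 ^ (T d)`.
-/

theorem LipschitzWith.antilipschitzWith_two_id_sub {E : Type*} [SeminormedAddCommGroup E]
    {h : E → E} {K : ℝ≥0} (hh : LipschitzWith K h) (hK : K ≤ 2⁻¹) :
    AntilipschitzWith 2 (fun x => x - h x) := by
  refine AntilipschitzWith.of_le_mul_dist fun x y => ?_
  have hK' : (K : ℝ) ≤ 2⁻¹ := by exact_mod_cast hK
  have hsplit : dist x y ≤ dist (x - h x) (y - h y) + K * dist x y :=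
    calc dist x y = ‖(x - h x - (y - h y)) + (h x - h y)‖ := by
          rw [dist_eq_norm]; congr 1; abel
      _ ≤ dist (x - h x) (y - h y) + dist (h x) (h y) := by
          rw [dist_eq_norm, dist_eq_norm (h x)]; exact norm_add_le _ _
      _ ≤ dist (x - h x) (y - h y) + K * dist x y := by gcongr; exact hh.dist_le_mul x y
  push_cast
  nlinarith [dist_nonneg (x := x) (y := y)]

theorem LipschitzWith.antilipschitzWith_two_sub_smul {E : Type*} [SeminormedAddCommGroup E]
    [NormedSpace ℝ E] {f' : E → E} {K : ℝ≥0} (hf' : LipschitzWith K f') {γ : ℝ} (hγ : 0 ≤ γ)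
    (hγK : γ * K ≤ 1 / 2) :
    AntilipschitzWith 2 (fun x => x - γ • f' x) := by
  refine ((lipschitzWith_smul γ).comp hf').antilipschitzWith_two_id_sub ?_
  rw [← NNReal.coe_le_coe]
  simpa [abs_of_nonneg hγ] using hγK

theorem AntilipschitzWith.addHaar_preimage_le {E : Type*} [NormedAddCommGroup E]
    [NormedSpace ℝ E] [FiniteDimensional ℝ E] [MeasurableSpace E] [BorelSpace E]
    (μ : Measure E) [μ.IsAddHaarMeasure] {K : ℝ≥0} {g : E → E} (hg : AntilipschitzWith K g)
    (s : Set E) :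
    μ (g ⁻¹' s) ≤ (K : ℝ≥0∞) ^ finrank ℝ E * μ s := by
  set c := Measure.addHaarScalarFactor μ μH[finrank ℝ E]
  have hμ : μ = c • μH[finrank ℝ E] := Measure.isAddLeftInvariant_eq_smul _ _
  have hH := hg.hausdorffMeasure_preimage_le (Nat.cast_nonneg (finrank ℝ E)) s
  rw [ENNReal.rpow_natCast] at hH
  rw [hμ, Measure.smul_apply, Measure.smul_apply, ENNReal.smul_def, ENNReal.smul_def, smul_eq_mul,
    smul_eq_mul, mul_left_comm]
  gcongr

theorem measure_preimage_iterate_le {α : Type*} [MeasurableSpace α] (μ : Measure α) {g : α → α}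
    {C : ℝ≥0∞} (hg : ∀ s, μ (g ⁻¹' s) ≤ C * μ s) (n : ℕ) (s : Set α) :
    μ (g^[n] ⁻¹' s) ≤ C ^ n * μ s := by
  induction n with
  | zero => simp
  | succ n ih =>
    calc μ (g^[n + 1] ⁻¹' s) = μ (g ⁻¹' (g^[n] ⁻¹' s)) := by rw [Function.iterate_succ]; rfl
      _ ≤ C * (C ^ n * μ s) := (hg _).trans (by gcongr)
      _ = C ^ (n + 1) * μ s := by rw [← mul_assoc, pow_succ']

theorem stmt2_general {d : ℕ} (L γ : ℝ) (hL : 0 < L) (hγ : 0 < γ) (hγL : γ ≤ 1 / (2 * L))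
    (f' : EuclideanSpace ℝ (Fin d) → EuclideanSpace ℝ (Fin d))
    (hlip : LipschitzWith (Real.toNNReal L) f')
    (T : ℕ)
    (Y : Set (EuclideanSpace ℝ (Fin d))) :
    volume ((fun x => x - γ • f' x)^[T] ⁻¹' Y) ≤ (2 : ℝ≥0∞) ^ (T * d) * volume Y := by
  have hγL' : γ * (Real.toNNReal L : ℝ) ≤ 1 / 2 := by
    rw [Real.coe_toNNReal _ hL.le, ← le_div_iff₀ hL]
    rwa [div_div]
  have hstep := hlip.antilipschitzWith_two_sub_smul hγ.le hγL'
  have hiter := measure_preimage_iterate_le volume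
    (fun s => by simpa using hstep.addHaar_preimage_le volume s) T Y
  rwa [← pow_mul, mul_comm d] at hiter

/-- With `g(x) = x - γ∇f(x)` as in Statement 1 and `g^T` its T-fold iterate,
`ℒ((g^T)⁻¹(Y)) ≤ 2^{Td} · ℒ(Y)` for every measurable `Y`. -/
theorem stmt2 {d : ℕ} (L γ : ℝ) (hL : 0 < L) (hγ : 0 < γ) (hγL : γ ≤ 1 / (2 * L))
    (f : EuclideanSpace ℝ (Fin d) → ℝ)
    (f' : EuclideanSpace ℝ (Fin d) → EuclideanSpace ℝ (Fin d))
    (hf : ContDiff ℝ 2 f)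
    (hgrad : ∀ x, HasGradientAt f (f' x) x)
    (hlip : LipschitzWith (Real.toNNReal L) f')
    (T : ℕ)
    (Y : Set (EuclideanSpace ℝ (Fin d))) (hY : MeasurableSet Y) :
    volume ((fun x => x - γ • f' x)^[T] ⁻¹' Y) ≤ (2 : ℝ≥0∞) ^ (T * d) * volume Y :=
  stmt2_general L γ hL hγ hγL f' hlip T Y
end

section
/- Let f : ℝ^d → ℝ be L-smooth and twice continuously differentiable and let X ⊆ ℝ^d have Lebesgue measure zero. If gradient descent with step size γ ≤ 1/(2L) is initialized uniformly at random in a set W with ℒ(W) > 0, then almost surely no iterate x_t (t ≥ 0) lies in X. -/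
/-!
Since `∇f` is `L`-Lipschitz and `γL ≤ 1/2`, the gradient step `x ↦ x - γ∇f(x)` is a perturbation
of the identity by a contraction, hence antilipschitz, and so are its iterates. Preimages of
Hausdorff-null sets under antilipschitz maps are Hausdorff-null, and Lebesgue measure is a nonzero
multiple of the `d`-dimensional Hausdorff measure, so the preimage of `X` under each iterate is
Lebesgue-null; the set of bad initializations is the countable union of these preimages.
-/

open MeasureTheory
open scoped ENNReal NNReal

theorem AntilipschitzWith.iterate {α : Type*} [PseudoEMetricSpace α] {K : ℝ≥0} {f : α → α}
    (hf : AntilipschitzWith K f) : ∀ n, AntilipschitzWith (K ^ n) f^[n]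
  | 0 => by simpa only [pow_zero, Function.iterate_zero] using AntilipschitzWith.id (α := α)
  | n + 1 => by rw [pow_succ']; exact (hf.iterate n).comp hf

theorem LipschitzWith.antilipschitzWith_id_sub {E : Type*} [SeminormedAddCommGroup E] {K : ℝ≥0}
    {F : E → E} (hF : LipschitzWith K F) (hK : K < 1) :
    AntilipschitzWith (1 - K)⁻¹ fun x => x - F x := by
  simpa only [inv_one, id_eq, Pi.neg_apply, sub_eq_add_neg] using
    AntilipschitzWith.id.add_lipschitzWith hF.neg (by rwa [inv_one])

theorem AntilipschitzWith.hausdorffMeasure_preimage_null {X Y : Type*} [EMetricSpace X]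
    [MeasurableSpace X] [BorelSpace X] [EMetricSpace Y] [MeasurableSpace Y] [BorelSpace Y]
    {K : ℝ≥0} {f : X → Y} (hf : AntilipschitzWith K f) {d : ℝ} (hd : 0 ≤ d) {s : Set Y}
    (hs : μH[d] s = 0) : μH[d] (f ⁻¹' s) = 0 :=
  le_antisymm ((hf.hausdorffMeasure_preimage_le hd s).trans_eq (by rw [hs, mul_zero])) zero_le

theorem AntilipschitzWith.volume_preimage_null {V W : Type*}
    [NormedAddCommGroup V] [InnerProductSpace ℝ V] [FiniteDimensional ℝ V]
    [MeasurableSpace V] [BorelSpace V]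
    [NormedAddCommGroup W] [InnerProductSpace ℝ W] [FiniteDimensional ℝ W]
    [MeasurableSpace W] [BorelSpace W]
    (hVW : Module.finrank ℝ V = Module.finrank ℝ W)
    {K : ℝ≥0} {f : V → W} (hf : AntilipschitzWith K f) {s : Set W}
    (hs : volume s = 0) : volume (f ⁻¹' s) = 0 := by
  rw [← InnerProductSpace.euclideanHausdorffMeasure_eq_volume,
    Measure.euclideanHausdorffMeasure_def] at hs ⊢
  simp only [Measure.smul_apply, ENNReal.smul_def, smul_eq_mul, mul_eq_zero, ENNReal.coe_eq_zero,
    Measure.addHaarScalarFactor_volume_hausdorffMeasure_ne_zero, false_or] at hs ⊢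
  rw [hVW]
  exact hf.hausdorffMeasure_preimage_null (Nat.cast_nonneg _) hs

theorem stmt4_general {d : ℕ} (L γ : ℝ) (hL : 0 < L) (hγ : 0 < γ) (hγL : γ ≤ 1 / (2 * L))
    (f' : EuclideanSpace ℝ (Fin d) → EuclideanSpace ℝ (Fin d))
    (hlip : LipschitzWith (Real.toNNReal L) f')
    (W X : Set (EuclideanSpace ℝ (Fin d)))
    (hX : volume X = 0) :
    volume {x₀ ∈ W | ∃ t : ℕ, (fun x => x - γ • f' x)^[t] x₀ ∈ X} = 0 := by
  have hcontract : ‖γ‖₊ * L.toNNReal < 1 := by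
    rw [← NNReal.coe_lt_coe, NNReal.coe_mul, coe_nnnorm, Real.norm_of_nonneg hγ.le,
      Real.coe_toNNReal _ hL.le, NNReal.coe_one]
    rw [le_div_iff₀ (by positivity)] at hγL
    linarith
  have hanti := ((lipschitzWith_smul γ).comp hlip).antilipschitzWith_id_sub hcontract
  exact measure_mono_null (fun x₀ ⟨_, t, ht⟩ => Set.mem_iUnion.2 ⟨t, ht⟩)
    (measure_iUnion_null fun t => (hanti.iterate t).volume_preimage_null rfl hX)

/-- If `ℒ(X) = 0`, GD with `γ ≤ 1/(2L)` initialized uniformly at random in `W`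
(of positive finite measure) almost surely never has an iterate in `X`. -/
theorem stmt4 {d : ℕ} (L γ : ℝ) (hL : 0 < L) (hγ : 0 < γ) (hγL : γ ≤ 1 / (2 * L))
    (f : EuclideanSpace ℝ (Fin d) → ℝ)
    (f' : EuclideanSpace ℝ (Fin d) → EuclideanSpace ℝ (Fin d))
    (hf : ContDiff ℝ 2 f)
    (hgrad : ∀ x, HasGradientAt f (f' x) x)
    (hlip : LipschitzWith (Real.toNNReal L) f')
    (W X : Set (EuclideanSpace ℝ (Fin d))) (hW : MeasurableSet W)
    (hWpos : 0 < volume W) (hWfin : volume W < ⊤)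
    (hX : volume X = 0) :
    volume {x₀ ∈ W | ∃ t : ℕ, (fun x => x - γ • f' x)^[t] x₀ ∈ X} = 0 :=
  stmt4_general L γ hL hγ hγL f' hlip W X hX
end
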